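/- arXiv:1306.4359 — 3 statements merged into one kernel-verified Lean document; each statement's English description precedes it below -/
import Mathlib

section
/- Every tree with t ≥ 2 nodes and maximum degree at most 3 admits an edge cover of size at most ⌊(2t+1)/3⌋. -/
/-- `C` is an edge cover of the graph `G`: a set of edges of `G` such that
every vertex is incident to at least one edge of `C`. -/
def IsEdgeCover {V : Type*} (G : SimpleGraph V) (C : Finset (Sym2 V)) : Prop :=
  ↑C ⊆ G.edgeSet ∧ ∀ v : V, ∃ e ∈ C, v ∈ e

/-!
A forest of maximum degree `Δ` has a matching with at least `|E| / Δ` edges: a leaf `u` and its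
neighbour `v` give one matching edge, and deleting the edges at `v` isolates both, removes at most
`Δ` edges and leaves a forest. Adding one edge at every unmatched vertex turns a matching `M` of a
graph without isolated vertices into an edge cover with `|V| - |M|` edges. For a tree with `t`
vertices `|E| = t - 1`, so for `Δ ≤ 3` this gives a cover with at most `t - (t - 1) / 3` edges.
-/

open Finset

namespace SimpleGraph

variable {V : Type*} {G H : SimpleGraph V}

lemma IsAcyclic.exists_degree_eq_one [Finite G.edgeSet] [G.LocallyFinite] (hG : G.IsAcyclic)
    (hE : G.edgeSet.Nonempty) : ∃ v, G.degree v = 1 := by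
  obtain ⟨e, he⟩ := hE
  induction e using Sym2.ind with | _ x y => ?_
  have : Nonempty V := ⟨x⟩
  -- the first vertex of a longest path is a leaf
  obtain ⟨u, v, p, hp, hmax⟩ := Walk.exists_isPath_forall_isPath_length_le_length G
  have hnil : ¬p.Nil := by
    have : 1 ≤ p.length := hmax _ _ _ (G.mem_edgeSet.mp he).isPath_toWalk
    rw [← Walk.length_eq_zero_iff]
    omega
  refine ⟨u, degree_eq_one_iff_existsUnique_adj.mpr ⟨_, p.adj_snd hnil, fun w hadj => ?_⟩⟩
  refine hG.eq_snd_of_adj_start hp hadj (by_contra fun hw => ?_)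
  have := hmax _ _ _ (hp.cons hw (h := hadj.symm))
  rw [Walk.length_cons] at this
  omega

lemma notMem_edge_of_notMem_support {v : V} (hv : v ∉ G.support) {e : Sym2 V}
    (he : e ∈ G.edgeSet) : v ∉ e := by
  induction e using Sym2.ind with | _ x y => ?_
  rw [Sym2.mem_iff]
  rintro (rfl | rfl)
  exacts [hv ⟨y, he⟩, hv ⟨x, (G.mem_edgeSet.mp he).symm⟩]

variable [DecidableEq V]

def IsEdgeMatching (G : SimpleGraph V) (M : Finset (Sym2 V)) : Prop :=
  ↑M ⊆ G.edgeSet ∧ (M : Set (Sym2 V)).PairwiseDisjoint Sym2.toFinset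

lemma isEdgeMatching_empty : G.IsEdgeMatching ∅ := by
  simp [IsEdgeMatching]

lemma IsEdgeMatching.insert {M : Finset (Sym2 V)} (hM : H.IsEdgeMatching M) (hHG : H ≤ G)
    {u v : V} (huv : G.Adj u v) (hu : u ∉ H.support) (hv : v ∉ H.support) :
    G.IsEdgeMatching (insert s(u, v) M) := by
  obtain ⟨hMH, hdisj⟩ := hM
  rw [IsEdgeMatching, coe_insert]
  refine ⟨Set.insert_subset huv (hMH.trans (edgeSet_mono hHG)), hdisj.insert fun e he _ => ?_⟩
  rw [Sym2.toFinset_mk_eq, disjoint_insert_left, disjoint_singleton_left, Sym2.mem_toFinset,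
    Sym2.mem_toFinset]
  exact ⟨notMem_edge_of_notMem_support hu (hMH he), notMem_edge_of_notMem_support hv (hMH he)⟩

theorem IsAcyclic.exists_isEdgeMatching_card_edgeFinset_le [Fintype V] [DecidableRel G.Adj]
    (hG : G.IsAcyclic) : ∃ M, G.IsEdgeMatching M ∧ #G.edgeFinset ≤ G.maxDegree * #M := by
  induction hn : #G.edgeFinset using Nat.strong_induction_on generalizing G with | _ n ih => ?_
  rcases G.edgeSet.eq_empty_or_nonempty with hE | hE
  · exact ⟨∅, isEdgeMatching_empty, by simp [← hn, edgeSet_eq_empty.mp hE]⟩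
  obtain ⟨u, hu⟩ := hG.exists_degree_eq_one hE
  obtain ⟨v, huv, hu⟩ := degree_eq_one_iff_existsUnique_adj.mp hu
  set H := G.deleteIncidenceSet v
  have hHG : H ≤ G := G.deleteIncidenceSet_le v
  have hcard : #H.edgeFinset + G.degree v = n := by
    have := G.degree_le_card_edgeFinset v
    rw [card_edgeFinset_deleteIncidenceSet]
    omega
  have hv : 0 < G.degree v := G.degree_pos_iff_exists_adj v |>.mpr ⟨u, huv.symm⟩
  obtain ⟨M, hM, hHM⟩ := ih _ (by omega) (hG.anti hHG) rfl
  have hvH : v ∉ H.support := fun ⟨w, hw⟩ => (deleteIncidenceSet_adj.mp hw).2.1 rfl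
  have huH : u ∉ H.support := fun ⟨w, hw⟩ =>
    have hw := deleteIncidenceSet_adj.mp hw
    hw.2.2 (hu w hw.1)
  have hnew : s(u, v) ∉ M := fun h =>
    notMem_edge_of_notMem_support huH (hM.1 h) (Sym2.mem_mk_left u v)
  refine ⟨insert s(u, v) M, hM.insert hHG huv huH hvH, ?_⟩
  rw [card_insert_of_notMem hnew, mul_add_one]
  have := G.degree_le_maxDegree v
  have := Nat.mul_le_mul_right #M (maxDegree_mono hHG)
  omega

theorem exists_isEdgeCover_card_add_card_le [Fintype V] (hG : G.support = Set.univ)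
    {M : Finset (Sym2 V)} (hM : G.IsEdgeMatching M) :
    ∃ C, IsEdgeCover G C ∧ #C + #M ≤ Fintype.card V := by
  obtain ⟨hMG, hdisj⟩ := hM
  set S := M.biUnion Sym2.toFinset
  have hS : #S = 2 * #M := by
    rw [card_biUnion hdisj, mul_comm, ← smul_eq_mul, ← sum_const]
    exact sum_congr rfl fun e he => Sym2.card_toFinset_of_not_isDiag e
      (G.not_isDiag_of_mem_edgeSet (hMG he))
  have hadj (v : V) : ∃ w, G.Adj v w := G.mem_support.mp (hG ▸ Set.mem_univ v)
  choose nbr hnbr using hadj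
  refine ⟨M ∪ Sᶜ.image fun v => s(v, nbr v), ⟨?_, fun v => ?_⟩, ?_⟩
  · rw [coe_union, Set.union_subset_iff, coe_image]
    exact ⟨hMG, Set.image_subset_iff.mpr fun v _ => hnbr v⟩
  · by_cases hv : v ∈ S
    · obtain ⟨e, he, hve⟩ := mem_biUnion.mp hv
      exact ⟨e, mem_union_left _ he, Sym2.mem_toFinset.mp hve⟩
    · exact ⟨s(v, nbr v), mem_union_right _ (mem_image_of_mem _ (mem_compl.mpr hv)),
        Sym2.mem_mk_left _ _⟩
  · have := card_union_le M (Sᶜ.image fun v => s(v, nbr v))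
    have := card_image_le (s := Sᶜ) (f := fun v => s(v, nbr v))
    have := card_compl S
    have := card_le_univ S
    omega

end SimpleGraph

/-- Every tree with `t ≥ 2` nodes and maximum degree at most 3 admits an edge
cover of size at most `⌊(2t+1)/3⌋`. -/
theorem tree_edgeCover_le {V : Type*} [Fintype V] [DecidableEq V]
    (G : SimpleGraph V) [DecidableRel G.Adj]
    (hT : G.IsTree) (ht : 2 ≤ Fintype.card V) (hΔ : G.maxDegree ≤ 3) :
    ∃ C : Finset (Sym2 V), IsEdgeCover G C ∧
      C.card ≤ (2 * Fintype.card V + 1) / 3 := by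
  have : Nontrivial V := Fintype.one_lt_card_iff_nontrivial.mp ht
  obtain ⟨M, hM, hEM⟩ := hT.isAcyclic.exists_isEdgeMatching_card_edgeFinset_le
  obtain ⟨C, hC, hCM⟩ :=
    SimpleGraph.exists_isEdgeCover_card_add_card_le hT.connected.preconnected.support_eq_univ hM
  have hE := hT.card_edgeFinset
  have := Nat.mul_le_mul_right #M hΔ
  exact ⟨C, hC, by omega⟩
end

section
/- Every tree with t nodes and maximum degree at most 3 has a matching with at least ⌈(t-1)/3⌉ edges. -/
/-!
Induction on the number of edges of a forest of maximum degree at most `k`: a leaf `x` exists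
(the end of a longest path); deleting all edges at its neighbour `y` removes `deg y ≤ k` edges
and isolates `x` and `y`, so a matching of the rest extends by `s(x, y)`. Hence `#E ≤ k * #M`,
and a tree on `t` vertices has `t - 1` edges.
-/

/-- `M` is a matching in `G`: a set of edges of `G` that are pairwise
vertex-disjoint. -/
def IsMatchingSet {V : Type*} (G : SimpleGraph V) (M : Finset (Sym2 V)) : Prop :=
  ↑M ⊆ G.edgeSet ∧ ∀ e ∈ M, ∀ f ∈ M, e ≠ f → ∀ v : V, ¬(v ∈ e ∧ v ∈ f)

open Finset SimpleGraph

theorem IsMatchingSet.mono {V : Type*} {G H : SimpleGraph V} {M : Finset (Sym2 V)}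
    (hGH : G ≤ H) (hM : IsMatchingSet G M) : IsMatchingSet H M :=
  ⟨hM.1.trans (edgeSet_mono hGH), hM.2⟩

theorem IsMatchingSet.insert {V : Type*} [DecidableEq V] {G : SimpleGraph V}
    {M : Finset (Sym2 V)} {e : Sym2 V} (hM : IsMatchingSet G M) (he : e ∈ G.edgeSet)
    (hdisj : ∀ f ∈ M, ∀ v ∈ e, v ∉ f) : IsMatchingSet G (insert e M) := by
  refine ⟨by simpa [Set.insert_subset_iff] using ⟨he, hM.1⟩, ?_⟩
  simp only [Finset.mem_insert]
  rintro f (rfl | hf) g (rfl | hg) hfg v ⟨hvf, hvg⟩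
  · exact hfg rfl
  · exact hdisj g hg v hvf hvg
  · exact hdisj f hf v hvg hvf
  · exact hM.2 f hf g hg hfg v ⟨hvf, hvg⟩

namespace SimpleGraph

variable {V : Type*} {G : SimpleGraph V}

theorem IsAcyclic.exists_degree_eq_one_s3 [Fintype V] [DecidableRel G.Adj] (hG : G.IsAcyclic)
    {u v : V} (huv : G.Adj u v) : ∃ x, G.degree x = 1 := by
  have : Nonempty V := ⟨u⟩
  obtain ⟨a, b, p, hp, hmax⟩ := Walk.exists_isPath_forall_isPath_length_le_length G
  have hnil : ¬p.Nil := by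
    rw [← Walk.length_eq_zero_iff]
    have := hmax u v huv.toWalk (by simpa using huv.ne)
    simp only [Walk.length_cons, Walk.length_nil] at this
    omega
  refine ⟨a, degree_eq_one_iff_existsUnique_adj.mpr ⟨_, p.adj_snd hnil, fun w hadj ↦ ?_⟩⟩
  -- A neighbour of `a` off the longest path `p` would extend it.
  refine hG.eq_snd_of_adj_start hp hadj ?_
  by_contra hw
  have := hmax _ _ _ (hp.cons hw (h := hadj.symm))
  simp only [Walk.length_cons] at this
  omega

theorem notMem_of_mem_edgeSet_deleteIncidenceSet {x y : V} (hx : ∀ w, G.Adj x w → w = y)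
    {e : Sym2 V} (he : e ∈ (G.deleteIncidenceSet y).edgeSet) : x ∉ e ∧ y ∉ e := by
  induction e using Sym2.ind with
  | h a b =>
    rw [mem_edgeSet, deleteIncidenceSet_adj] at he
    obtain ⟨hab, hay, hby⟩ := he
    refine ⟨?_, by simp [hay.symm, hby.symm]⟩
    intro hxe
    rcases Sym2.mem_iff.mp hxe with rfl | rfl
    · exact hby (hx b hab)
    · exact hay (hx a hab.symm)

theorem IsAcyclic.exists_isMatchingSet_card_edgeFinset_le [Fintype V] [DecidableEq V]
    [DecidableRel G.Adj] (hG : G.IsAcyclic) {k : ℕ} (hk : G.maxDegree ≤ k) :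
    ∃ M : Finset (Sym2 V), IsMatchingSet G M ∧ #G.edgeFinset ≤ k * #M := by
  induction hn : #G.edgeFinset using Nat.strong_induction_on generalizing G with
  | _ n ih =>
  by_cases hbot : G = ⊥
  · subst hbot
    exact ⟨∅, ⟨by simp, by simp⟩, by simp [← hn]⟩
  obtain ⟨u, v, huv⟩ := ne_bot_iff_exists_adj.mp hbot
  obtain ⟨x, hx⟩ := hG.exists_degree_eq_one_s3 huv
  obtain ⟨y, hxy, hy⟩ := degree_eq_one_iff_existsUnique_adj.mp hx
  have hcard := G.card_edgeFinset_deleteIncidenceSet y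
  have hdeg_pos : 0 < G.degree y := G.degree_pos_iff_exists_adj y |>.mpr ⟨x, hxy.symm⟩
  have hdeg_le : G.degree y ≤ #G.edgeFinset := by
    rw [← card_incidenceFinset_eq_degree]; exact card_le_card (G.incidenceFinset_subset y)
  obtain ⟨M, hM, hMcard⟩ := ih _ (by omega) (hG.anti (G.deleteIncidenceSet_le y))
    ((maxDegree_mono (G.deleteIncidenceSet_le y)).trans hk) rfl
  have hdisj : ∀ f ∈ M, ∀ w ∈ s(x, y), w ∉ f := by
    intro f hf w hw
    have := notMem_of_mem_edgeSet_deleteIncidenceSet hy (hM.1 hf)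
    rcases Sym2.mem_iff.mp hw with rfl | rfl <;> tauto
  refine ⟨insert s(x, y) M, (hM.mono (G.deleteIncidenceSet_le y)).insert hxy hdisj, ?_⟩
  rw [card_insert_of_notMem fun h ↦ hdisj _ h x (Sym2.mem_mk_left x y) (Sym2.mem_mk_left x y)]
  have := (G.degree_le_maxDegree y).trans hk
  rw [mul_add_one]
  omega

end SimpleGraph

/-- Every tree with `t` nodes and maximum degree at most 3 has a matching with
at least `⌈(t-1)/3⌉` edges. -/
theorem tree_matching_ge {V : Type*} [Fintype V] [DecidableEq V]
    (G : SimpleGraph V) [DecidableRel G.Adj]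
    (hT : G.IsTree) (hΔ : G.maxDegree ≤ 3) :
    ∃ M : Finset (Sym2 V), IsMatchingSet G M ∧
      (Fintype.card V - 1 + 2) / 3 ≤ M.card := by
  obtain ⟨M, hM, hcard⟩ := hT.isAcyclic.exists_isMatchingSet_card_edgeFinset_le hΔ
  have := hT.card_edgeFinset
  exact ⟨M, hM, by omega⟩
end

section
/- Let T be a tree with maximum degree 3 in which the numbers of vertices of each degree satisfy t₂ = t₃ - 1 (so the total number of vertices is t = 3t₃ + 1). Then any edge cover of T has at least (2t+1)/3 edges. -/
/-- Let `T` be a tree whose vertices all have degree 1, 2 or 3, in which no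
edge joins two vertices of degree at most 2, and where the number of degree-2
vertices is one less than the number of degree-3 vertices. Then any edge cover
of `T` has at least `(2t+1)/3` edges, where `t` is the number of vertices. -/
theorem tree_edgeCover_lower_bound {V : Type*} [Fintype V] [DecidableEq V]
    (G : SimpleGraph V) [DecidableRel G.Adj]
    (hT : G.IsTree)
    (hdeg : ∀ v : V, G.degree v = 1 ∨ G.degree v = 2 ∨ G.degree v = 3)
    (hadj : ∀ u v : V, G.Adj u v → ¬(G.degree u ≤ 2 ∧ G.degree v ≤ 2))
    (ht : (Finset.univ.filter (fun v => G.degree v = 2)).card + 1 =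
      (Finset.univ.filter (fun v => G.degree v = 3)).card)
    (C : Finset (Sym2 V)) (hC : IsEdgeCover G C) :
    (2 * Fintype.card V + 1) / 3 ≤ C.card := by
  classical
  obtain ⟨hsub, hcov⟩ := hC
  set S : Finset V := Finset.univ.filter (fun v => G.degree v ≤ 2) with hS
  have hf : ∀ v : V, ∃ e, e ∈ C ∧ v ∈ e := fun v => by
    obtain ⟨e, he, hv⟩ := hcov v; exact ⟨e, he, hv⟩
  choose f hfC hfv using hf
  have hinj : Set.InjOn f (S : Set V) := by
    intro u hu v hv huv
    by_contra hne
    have hu2 : G.degree u ≤ 2 := by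
      have := hu; simp [hS] at this; exact this
    have hv2 : G.degree v ≤ 2 := by
      have := hv; simp [hS] at this; exact this
    have hmv : v ∈ f u := huv ▸ hfv v
    have heq : f u = s(u, v) := (Sym2.mem_and_mem_iff hne).1 ⟨hfv u, hmv⟩
    have hadj' : G.Adj u v := by
      have := hsub (hfC u)
      rw [heq] at this
      exact this
    exact hadj u v hadj' ⟨hu2, hv2⟩
  have hcard : S.card ≤ C.card :=
    Finset.card_le_card_of_injOn f (fun v _ => hfC v) hinj
  -- count vertices by degree
  set f1 := Finset.univ.filter (fun v => G.degree v = 1) with hf1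
  set f2 := Finset.univ.filter (fun v => G.degree v = 2) with hf2
  set f3 := Finset.univ.filter (fun v => G.degree v = 3) with hf3
  have hSeq : S = f1 ∪ f2 := by
    ext v
    simp only [hS, hf1, hf2, Finset.mem_filter, Finset.mem_union, Finset.mem_univ, true_and]
    rcases hdeg v with h | h | h <;> omega
  have hd12 : Disjoint f1 f2 := by
    rw [Finset.disjoint_left]
    intro a h1 h2
    simp [hf1, hf2] at h1 h2; omega
  have hd123 : Disjoint (f1 ∪ f2) f3 := by
    rw [Finset.disjoint_left]
    intro a h1 h2
    simp [hf1, hf2, hf3] at h1 h2; omega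
  have htot : f1.card + f2.card + f3.card = Fintype.card V := by
    have huniv : f1 ∪ f2 ∪ f3 = Finset.univ := by
      ext v
      simp only [hf1, hf2, hf3, Finset.mem_filter, Finset.mem_union, Finset.mem_univ, true_and,
        iff_true]
      rcases hdeg v with h | h | h <;> omega
    calc f1.card + f2.card + f3.card
        = (f1 ∪ f2).card + f3.card := by rw [Finset.card_union_of_disjoint hd12]
      _ = (f1 ∪ f2 ∪ f3).card := (Finset.card_union_of_disjoint hd123).symm
      _ = Fintype.card V := by rw [huniv, Finset.card_univ]
  have hsum : ∑ v, G.degree v = 2 * G.edgeFinset.card :=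
    SimpleGraph.sum_degrees_eq_twice_card_edges G
  have hedges : G.edgeFinset.card + 1 = Fintype.card V := hT.card_edgeFinset
  have hsum2 : ∑ v, G.degree v = f1.card + 2 * f2.card + 3 * f3.card := by
    have huniv : f1 ∪ f2 ∪ f3 = Finset.univ := by
      ext v
      simp only [hf1, hf2, hf3, Finset.mem_filter, Finset.mem_union, Finset.mem_univ, true_and,
        iff_true]
      rcases hdeg v with h | h | h <;> omega
    rw [← huniv, Finset.sum_union hd123, Finset.sum_union hd12]
    have e1 : ∑ v ∈ f1, G.degree v = f1.card := by
      rw [Finset.sum_congr rfl (fun v hv => by simp [hf1] at hv; exact hv)]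
      simp
    have e2 : ∑ v ∈ f2, G.degree v = 2 * f2.card := by
      rw [Finset.sum_congr rfl (fun v hv => (by simp [hf2] at hv; exact hv : G.degree v = 2))]
      simp [mul_comm]
    have e3 : ∑ v ∈ f3, G.degree v = 3 * f3.card := by
      rw [Finset.sum_congr rfl (fun v hv => (by simp [hf3] at hv; exact hv : G.degree v = 3))]
      simp [mul_comm]
    rw [e1, e2, e3]
  have hScard : S.card = f1.card + f2.card := by
    rw [hSeq, Finset.card_union_of_disjoint hd12]
  omega
end
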